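/- (Proposition 2.1, pathwise inequality (eq.down2).) Let ε ∈ (0,a) and q, s ≥ 0. If τ_a < ∞ and τ_a < T_{x+ε}^+, then T_{x+ε−a}^- ≤ τ_a (in particular T_{x+ε−a}^- < ∞), Y(τ_a) ≥ x − f(T_{x+ε−a}^-), and consequently e^{−q τ_a − s(Y(τ_a) − a)} ≤ e^{−q T_{x+ε−a}^- − s(x − a − f(T_{x+ε−a}^-))}. -/

import Mathlib

open Filter Set
open scoped NNReal ENNReal Topology

noncomputable section

/-- The first time `t ∈ [0,∞)` at which the predicate `P` holds, valued in `[0,∞]`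
(with the convention `inf ∅ = ∞`). -/
def hitTime (P : ℝ≥0 → Prop) : ℝ≥0∞ :=
  sInf ((fun t : ℝ≥0 => (t : ℝ≥0∞)) '' {t | P t})

/-- The first passage time of `f` above the level `y`. -/
def Tplus (f : ℝ≥0 → ℝ) (y : ℝ) : ℝ≥0∞ := hitTime (fun t => y < f t)

/-- The first passage time of `f` below the level `y`. -/
def Tminus (f : ℝ≥0 → ℝ) (y : ℝ) : ℝ≥0∞ := hitTime (fun t => f t < y)

/-- The running maximum `M(t) = sup_{0 ≤ s ≤ t} f(s)`. -/
def runMax (f : ℝ≥0 → ℝ) (t : ℝ≥0) : ℝ := sSup (f '' Set.Iic t)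

/-- The drawdown `Y(t) = M(t) − f(t)`. -/
def drawdown (f : ℝ≥0 → ℝ) (t : ℝ≥0) : ℝ := runMax f t - f t

/-- The first time the drawdown exceeds `a`. -/
def tauD (f : ℝ≥0 → ℝ) (a : ℝ) : ℝ≥0∞ := hitTime (fun t => a < drawdown f t)

/-- Evaluation point of a finite `[0,∞]`-valued time. -/
def ev (T : ℝ≥0∞) : ℝ≥0 := T.toNNReal

end


lemma hitTime_le' {P : ℝ≥0 → Prop} {t : ℝ≥0} (h : P t) : hitTime P ≤ (t : ℝ≥0∞) :=
  sInf_le ⟨t, h, rfl⟩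

lemma exists_hitTime_lt' {P : ℝ≥0 → Prop} {b : ℝ≥0∞} (h : hitTime P < b) :
    ∃ t : ℝ≥0, P t ∧ (t : ℝ≥0∞) < b := by
  obtain ⟨y, hy, hyb⟩ := sInf_lt_iff.mp h
  obtain ⟨t, ht, rfl⟩ := hy
  exact ⟨t, ht, hyb⟩

/-- **Proposition 2.1, pathwise inequality (eq.down2).**
If `τ_a < ∞` and `τ_a < T_{x+ε}^+`, then `T_{x+ε−a}^- ≤ τ_a` (in particular
`T_{x+ε−a}^- < ∞`), `Y(τ_a) ≥ x − f(T_{x+ε−a}^-)`, and consequently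
`e^{−q τ_a − s(Y(τ_a) − a)} ≤ e^{−q T_{x+ε−a}^- − s(x − a − f(T_{x+ε−a}^-))}`. -/
theorem eq_down2 (x a : ℝ) (ha : 0 < a) (f : ℝ≥0 → ℝ)
    (hrc : ∀ t : ℝ≥0, ContinuousWithinAt f (Set.Ici t) t)
    (hbdd : ∀ b : ℝ≥0, ∃ C : ℝ, ∀ t ≤ b, |f t| ≤ C)
    (hf0 : f 0 = x) (ε q s : ℝ) (hε : 0 < ε) (hεa : ε < a) (hq : 0 ≤ q) (hs : 0 ≤ s)
    (hτfin : tauD f a ≠ ⊤)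
    (hτlt : tauD f a < Tplus f (x + ε)) :
    Tminus f (x + ε - a) ≤ tauD f a ∧ Tminus f (x + ε - a) ≠ ⊤ ∧
    x - f (ev (Tminus f (x + ε - a))) ≤ drawdown f (ev (tauD f a)) ∧
    Real.exp (-q * ((ev (tauD f a) : ℝ)) - s * (drawdown f (ev (tauD f a)) - a)) ≤
      Real.exp (-q * ((ev (Tminus f (x + ε - a)) : ℝ))
        - s * (x - a - f (ev (Tminus f (x + ε - a))))) := by

  have hbddA : ∀ t : ℝ≥0, BddAbove (f '' Set.Iic t) := by
    intro t
    obtain ⟨C, hC⟩ := hbdd t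
    refine ⟨C, ?_⟩
    rintro y ⟨s', hs', rfl⟩
    exact (abs_le.mp (hC s' hs')).2
  have hle_runMax : ∀ {u t : ℝ≥0}, u ≤ t → f u ≤ runMax f t := fun {u t} h =>
    le_csSup (hbddA t) ⟨u, h, rfl⟩
  have hrunMax_le : ∀ {t : ℝ≥0} {C : ℝ}, (∀ u ≤ t, f u ≤ C) → runMax f t ≤ C := by
    intro t C h
    refine csSup_le ⟨f 0, Set.mem_image_of_mem f (zero_le : (0:ℝ≥0) ≤ t)⟩ ?_
    rintro y ⟨u, hu, rfl⟩
    exact h u hu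
  have hxle : ∀ t : ℝ≥0, x ≤ runMax f t := fun t => hf0 ▸ hle_runMax (zero_le : (0:ℝ≥0) ≤ t)
  set τ := tauD f a with hτdef
  set t₀ : ℝ≥0 := ev τ with ht₀
  have hcoe : (t₀ : ℝ≥0∞) = τ := ENNReal.coe_toNNReal hτfin
  have hfb : ∀ t : ℝ≥0, (t : ℝ≥0∞) < Tplus f (x + ε) → ∀ u ≤ t, f u ≤ x + ε := by
    intro t ht u hu
    by_contra hc
    push_neg at hc
    have : Tplus f (x + ε) ≤ (u : ℝ≥0∞) := hitTime_le' hc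
    exact absurd ((this.trans (by exact_mod_cast hu)).trans_lt ht) (lt_irrefl _)
  -- Step 1 : Tminus ≤ τ
  have h1 : Tminus f (x + ε - a) ≤ τ := by
    by_contra h
    push_neg at h
    obtain ⟨c, hc1, hc2⟩ := exists_between (lt_min h hτlt)
    obtain ⟨t, ht, htc⟩ := exists_hitTime_lt' (show τ < c from hc1)
    have htp : (t : ℝ≥0∞) < Tplus f (x + ε) := htc.trans_le (le_min_iff.mp hc2.le).2
    have hM : runMax f t ≤ x + ε := hrunMax_le (hfb t htp)
    have hft : f t < x + ε - a := by
      have : a < runMax f t - f t := ht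
      linarith
    have hTm : Tminus f (x + ε - a) ≤ (t : ℝ≥0∞) := hitTime_le' hft
    exact absurd (hTm.trans_lt (htc.trans_le (le_min_iff.mp hc2.le).1)) (lt_irrefl _)
  have h2 : Tminus f (x + ε - a) ≠ ⊤ := ne_top_of_le_ne_top hτfin h1
  set t₁ : ℝ≥0 := ev (Tminus f (x + ε - a)) with ht₁
  have hcoe1 : (t₁ : ℝ≥0∞) = Tminus f (x + ε - a) := ENNReal.coe_toNNReal h2
  -- Step 3 : a ≤ drawdown f t₀ (right-continuity)
  have h3 : a ≤ drawdown f t₀ := by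
    refine le_of_forall_pos_le_add fun η hη => ?_
    have hrc0 := hrc t₀
    rw [Metric.continuousWithinAt_iff] at hrc0
    obtain ⟨δ, hδ, hδ'⟩ := hrc0 (η / 2) (by positivity)
    set δ' : ℝ≥0 := Real.toNNReal (δ / 2) with hδ'def
    have hδ'pos : (δ' : ℝ≥0∞) ≠ 0 := by
      simp only [ne_eq, ENNReal.coe_eq_zero, hδ'def, Real.toNNReal_eq_zero, not_le]
      linarith
    have hlt : τ < τ + δ' := ENNReal.lt_add_right hτfin hδ'pos
    obtain ⟨t, ht, htlt⟩ := exists_hitTime_lt' (show τ < τ + δ' from hlt)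
    have hτle : τ ≤ (t : ℝ≥0∞) := hitTime_le' ht
    have ht₀t : t₀ ≤ t := by rw [← ENNReal.coe_le_coe, hcoe]; exact hτle
    have hδ'val : (δ' : ℝ) = δ / 2 := Real.coe_toNNReal _ (by linarith)
    have hdist : ((t : ℝ) - (t₀ : ℝ)) < δ := by
      have h' : (t : ℝ≥0∞) < (t₀ : ℝ≥0∞) + (δ' : ℝ≥0∞) := by rw [hcoe]; exact htlt
      rw [← ENNReal.coe_add, ENNReal.coe_lt_coe] at h'
      have h'' : (t : ℝ) < (t₀ : ℝ) + (δ' : ℝ) := by exact_mod_cast h'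
      linarith
    have hkey : ∀ u : ℝ≥0, t₀ ≤ u → u ≤ t → |f u - f t₀| < η / 2 := by
      intro u h1u h2u
      have hmem : u ∈ Set.Ici t₀ := h1u
      have hd : dist u t₀ < δ := by
        rw [NNReal.dist_eq]
        have hu1 : (t₀ : ℝ) ≤ (u : ℝ) := by exact_mod_cast h1u
        have hu2 : (u : ℝ) ≤ (t : ℝ) := by exact_mod_cast h2u
        rw [abs_of_nonneg (by linarith)]
        linarith
      have := hδ' hmem hd
      rwa [Real.dist_eq] at this
    have hMt : runMax f t ≤ runMax f t₀ + η / 2 := by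
      apply hrunMax_le
      intro u hu
      rcases le_or_gt u t₀ with h' | h'
      · linarith [hle_runMax h']
      · have h'' := (abs_lt.mp (hkey u h'.le hu)).2
        have hft₀ : f t₀ ≤ runMax f t₀ := hle_runMax le_rfl
        linarith
    have hft : f t₀ - η / 2 < f t := by
      have := (abs_lt.mp (hkey t ht₀t le_rfl)).1
      linarith
    have hdd : a < runMax f t - f t := ht
    have : drawdown f t₀ = runMax f t₀ - f t₀ := rfl
    rw [this]
    linarith
  -- Step 4
  have h4 : x - f t₁ ≤ drawdown f t₀ := by
    rcases le_or_gt (x - f t₁) a with h | h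
    · exact h.trans h3
    · have hd1 : a < drawdown f t₁ := by
        have : drawdown f t₁ = runMax f t₁ - f t₁ := rfl
        rw [this]
        linarith [hxle t₁]
      have hτle : τ ≤ (t₁ : ℝ≥0∞) := hitTime_le' hd1
      have heq : τ = Tminus f (x + ε - a) := le_antisymm (hcoe1 ▸ hτle) h1
      have ht01 : t₀ = t₁ := by rw [ht₀, ht₁, heq]
      rw [ht01]
      have : drawdown f t₁ = runMax f t₁ - f t₁ := rfl
      rw [this]
      linarith [hxle t₁]
  -- Step 5
  have htle : (t₁ : ℝ) ≤ (t₀ : ℝ) := by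
    have h' : t₁ ≤ t₀ := by rw [← ENNReal.coe_le_coe, hcoe, hcoe1]; exact h1
    exact_mod_cast h'
  refine ⟨h1, h2, h4, Real.exp_le_exp.mpr ?_⟩
  have hm1 := mul_le_mul_of_nonneg_left htle hq
  have hm2 := mul_le_mul_of_nonneg_left (by linarith : x - a - f t₁ ≤ drawdown f t₀ - a) hs
  nlinarith [hm1, hm2]
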